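/- Let Ω ⊆ ℝ^d be measurable with Lebesgue measure. Let ψ : Ω → ℂ be differentiable with gradient ∇ψ, and let A : Ω → ℝ^d be measurable. Assume ∇ψ ∈ L²(Ω; ℂ^d), ψ ∈ L²(Ω) ∩ L⁶(Ω), ‖A‖_{L⁶} < ∞, and let S ≥ 0 satisfy ‖ψ‖_{L⁶} ≤ S·‖∇ψ‖_{L²}. Then the coercivity lower bound holds: ‖ i∇ψ + ψA ‖²_{L²} + S²·‖A‖⁴_{L⁶}·‖ψ‖²_{L²} ≥ (9/32)·‖∇ψ‖²_{L²}. -/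

import Mathlib

/-!
Pointwise, `‖∇ψ‖ ≤ ‖i∇ψ + ψA‖ + |ψ| ‖A‖`, so by Minkowski `‖∇ψ‖₂ ≤ ‖i∇ψ + ψA‖₂ + ‖ψA‖₂`.
Hölder's inequality for `ψ · ψ · A · A` with `1 = 1/2 + 1/6 + 1/6 + 1/6`, followed by the Sobolev
bound, gives `‖ψA‖₂² ≤ ‖ψ‖₂ ‖ψ‖₆ ‖A‖₆² ≤ K ‖∇ψ‖₂` with `K = S ‖A‖₆² ‖ψ‖₂`, hence
`‖ψA‖₂ ≤ ‖∇ψ‖₂ / 4 + K`. Therefore `‖i∇ψ + ψA‖₂ + K ≥ (3/4) ‖∇ψ‖₂`, and squaring gives the bound.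
-/

open Complex MeasureTheory

noncomputable section

/-- The `j`-th component of the gradient of `f` on `Ω` (from the Fréchet derivative). -/
def gradW {d : ℕ} (Ω : Set (EuclideanSpace ℝ (Fin d)))
    (f : EuclideanSpace ℝ (Fin d) → ℂ) (x : EuclideanSpace ℝ (Fin d)) (j : Fin d) : ℂ :=
  fderivWithin ℝ f Ω x (EuclideanSpace.single j 1)

lemma ENNReal.holderTriple_six_six_three : ENNReal.HolderTriple 6 6 3 := ⟨by
  rw [← ENNReal.toReal_eq_toReal_iff' (by simp) (by simp), ENNReal.toReal_add (by simp) (by simp)]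
  norm_num⟩

lemma ENNReal.holderTriple_six_three_two : ENNReal.HolderTriple 6 3 2 := ⟨by
  rw [← ENNReal.toReal_eq_toReal_iff' (by simp) (by simp), ENNReal.toReal_add (by simp) (by simp)]
  norm_num⟩

lemma nine_div_thirty_two_mul_sq_le {g f h K : ℝ} (hg : 0 ≤ g) (hK : 0 ≤ K)
    (hgfh : g ≤ f + h) (hh : h ^ 2 ≤ K * g) : 9 / 32 * g ^ 2 ≤ f ^ 2 + K ^ 2 := by
  have h_le : h ≤ K + g / 4 :=
    abs_le_of_sq_le_sq' (by nlinarith [sq_nonneg (K - g / 4)]) (by positivity) |>.2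
  nlinarith [sq_nonneg (f - K)]

lemma abs_norm_sub_norm_I_smul_add_le {E : Type*} [NormedAddCommGroup E] [NormedSpace ℂ E]
    (u w : E) : |‖u‖ - ‖I • u + w‖| ≤ ‖w‖ := by
  simpa [norm_smul] using abs_norm_sub_norm_le (I • u) (I • u + w)

namespace MeasureTheory

variable {α E F : Type*} {m : MeasurableSpace α} {μ : Measure α}
  [NormedAddCommGroup E] [NormedAddCommGroup F]

section OfNat

variable {f : α → E} (n : ℕ) [n.AtLeastTwo]

lemma memLp_ofNat_of_integrable_norm_pow (hf : AEStronglyMeasurable f μ)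
    (h : Integrable (fun x => ‖f x‖ ^ n) μ) : MemLp f ofNat(n) μ :=
  (integrable_norm_rpow_iff hf (NeZero.ne _) (ENNReal.natCast_ne_top n)).mp (by simpa using h)

lemma lpNorm_ofNat_eq_integral (hf : AEStronglyMeasurable f μ) :
    lpNorm f ofNat(n) μ = (∫ x, ‖f x‖ ^ n ∂μ) ^ ((1 : ℝ) / ofNat(n)) := by
  have h := lpNorm_nnreal_eq_integral_norm_rpow (p := (n : NNReal)) (NeZero.ne _) hf
  simp only [NNReal.coe_natCast, Real.rpow_natCast, ENNReal.coe_natCast] at h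
  rwa [one_div]

lemma lpNorm_ofNat_pow_eq_integral (hf : AEStronglyMeasurable f μ) :
    lpNorm f ofNat(n) μ ^ n = ∫ x, ‖f x‖ ^ n ∂μ := by
  rw [lpNorm_ofNat_eq_integral n hf, one_div]
  exact Real.rpow_inv_natCast_pow (integral_nonneg fun _ => by positivity) (NeZero.ne _)

end OfNat

section Holder

variable {φ a : α → ℝ}

lemma eLpNorm_mul_sq_le (hφ : AEStronglyMeasurable φ μ) (ha : AEStronglyMeasurable a μ) :
    eLpNorm (φ * a) 2 μ ^ 2
      ≤ eLpNorm φ 2 μ * (eLpNorm φ 6 μ * (eLpNorm a 6 μ * eLpNorm a 6 μ)) := by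
  have := ENNReal.holderTriple_six_six_three
  have := ENNReal.holderTriple_six_three_two
  have hsq : eLpNorm (φ * a) 2 μ ^ 2 = eLpNorm (φ • (φ • (a • a))) 1 μ := by
    have h := eLpNorm_norm_rpow (μ := μ) (p := 1) (φ * a) two_pos
    rw [one_mul, ENNReal.ofReal_ofNat, ENNReal.rpow_two] at h
    rw [← h]
    refine eLpNorm_congr_norm_ae (.of_forall fun x => ?_)
    rw [Real.norm_of_nonneg (by positivity), Real.rpow_two]
    simp only [Pi.mul_apply, smul_eq_mul, norm_mul]
    ring
  calc eLpNorm (φ * a) 2 μ ^ 2 = eLpNorm (φ • (φ • (a • a))) 1 μ := hsq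
    _ ≤ eLpNorm φ 2 μ * eLpNorm (φ • (a • a)) 2 μ :=
      eLpNorm_smul_le_mul_eLpNorm (hφ.smul (ha.smul ha)) hφ
    _ ≤ eLpNorm φ 2 μ * (eLpNorm φ 6 μ * eLpNorm (a • a) 3 μ) := by
      gcongr; exact eLpNorm_smul_le_mul_eLpNorm (ha.smul ha) hφ
    _ ≤ eLpNorm φ 2 μ * (eLpNorm φ 6 μ * (eLpNorm a 6 μ * eLpNorm a 6 μ)) := by
      gcongr; exact eLpNorm_smul_le_mul_eLpNorm ha ha

lemma MemLp.mul_two_of_six (hφ2 : MemLp φ 2 μ) (hφ6 : MemLp φ 6 μ) (ha : MemLp a 6 μ) :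
    MemLp (φ * a) 2 μ := by
  refine ⟨hφ2.1.mul ha.1, ?_⟩
  have hfin : eLpNorm (φ * a) 2 μ ^ 2 < ⊤ := (eLpNorm_mul_sq_le hφ2.1 ha.1).trans_lt <|
    ENNReal.mul_lt_top hφ2.2 (ENNReal.mul_lt_top hφ6.2 (ENNReal.mul_lt_top ha.2 ha.2))
  simpa using hfin

lemma lpNorm_mul_sq_le (hφ2 : MemLp φ 2 μ) (hφ6 : MemLp φ 6 μ) (ha : MemLp a 6 μ) :
    lpNorm (φ * a) 2 μ ^ 2 ≤ lpNorm φ 2 μ * lpNorm φ 6 μ * lpNorm a 6 μ ^ 2 := by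
  have h := ENNReal.toReal_mono ?_ (eLpNorm_mul_sq_le hφ2.1 ha.1 (μ := μ))
  · simpa [ENNReal.toReal_mul, ENNReal.toReal_pow, toReal_eLpNorm, hφ2.1, ha.1, hφ2.1.mul ha.1,
      mul_assoc, sq] using h
  · exact ENNReal.mul_ne_top hφ2.eLpNorm_ne_top <| ENNReal.mul_ne_top hφ6.eLpNorm_ne_top <|
      ENNReal.mul_ne_top ha.eLpNorm_ne_top ha.eLpNorm_ne_top

theorem nine_div_thirty_two_mul_lpNorm_sq_le {u : α → E} {v : α → F} (hu : MemLp u 2 μ)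
    (hv : AEStronglyMeasurable v μ) (hφ2 : MemLp φ 2 μ) (hφ6 : MemLp φ 6 μ) (ha : MemLp a 6 μ)
    (huv : ∀ x, |‖u x‖ - ‖v x‖| ≤ ‖φ x‖ * ‖a x‖) {S : ℝ} (hS : 0 ≤ S)
    (hSob : lpNorm φ 6 μ ≤ S * lpNorm u 2 μ) :
    9 / 32 * lpNorm u 2 μ ^ 2 ≤ lpNorm v 2 μ ^ 2 + S ^ 2 * lpNorm a 6 μ ^ 4 * lpNorm φ 2 μ ^ 2 := by
  have hφa := hφ2.mul_two_of_six hφ6 ha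
  have hv2 : MemLp v 2 μ := (hu.norm.add hφa.norm).of_le hv (.of_forall fun x => by
    have := (abs_le.mp (huv x)).1
    simp only [Pi.add_apply, Pi.mul_apply, norm_mul, Real.norm_eq_abs] at this ⊢
    rw [abs_of_nonneg (by positivity)]
    linarith)
  have hu_le : lpNorm u 2 μ ≤ lpNorm v 2 μ + lpNorm (φ * a) 2 μ := by
    calc lpNorm u 2 μ ≤ lpNorm (fun x => ‖v x‖ + ‖(φ * a) x‖) 2 μ :=
          lpNorm_mono_real (hv2.norm.add hφa.norm) fun x => by
            have := (abs_le.mp (huv x)).2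
            rw [Pi.mul_apply, norm_mul]
            linarith
      _ ≤ lpNorm v 2 μ + lpNorm (φ * a) 2 μ := by
          have := lpNorm_add_le hv2.norm (g := fun x => ‖(φ * a) x‖) one_le_two
          rwa [lpNorm_norm hv, lpNorm_norm hφa.1] at this
  have hφa_sq : lpNorm (φ * a) 2 μ ^ 2 ≤ (S * lpNorm a 6 μ ^ 2 * lpNorm φ 2 μ) * lpNorm u 2 μ :=
    calc lpNorm (φ * a) 2 μ ^ 2 ≤ lpNorm φ 2 μ * lpNorm φ 6 μ * lpNorm a 6 μ ^ 2 :=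
          lpNorm_mul_sq_le hφ2 hφ6 ha
      _ ≤ lpNorm φ 2 μ * (S * lpNorm u 2 μ) * lpNorm a 6 μ ^ 2 := by
          gcongr; exact lpNorm_nonneg
      _ = _ := by ring
  have := nine_div_thirty_two_mul_sq_le lpNorm_nonneg
    (mul_nonneg (mul_nonneg hS (sq_nonneg _)) lpNorm_nonneg) hu_le hφa_sq
  linarith [show (S * lpNorm a 6 μ ^ 2 * lpNorm φ 2 μ) ^ 2
    = S ^ 2 * lpNorm a 6 μ ^ 4 * lpNorm φ 2 μ ^ 2 by ring]

end Holder

theorem nine_div_thirty_two_mul_integral_norm_sq_le {G H : Type*} [NormedAddCommGroup G]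
    [NormedAddCommGroup H] {u : α → E} {v : α → F} {ψ : α → G} {A : α → H}
    (hu : AEStronglyMeasurable u μ) (hv : AEStronglyMeasurable v μ)
    (hψ : AEStronglyMeasurable ψ μ) (hA : AEStronglyMeasurable A μ)
    (hu2 : Integrable (fun x => ‖u x‖ ^ 2) μ) (hψ2 : Integrable (fun x => ‖ψ x‖ ^ 2) μ)
    (hψ6 : Integrable (fun x => ‖ψ x‖ ^ 6) μ) (hA6 : Integrable (fun x => ‖A x‖ ^ 6) μ)
    (huv : ∀ x, |‖u x‖ - ‖v x‖| ≤ ‖ψ x‖ * ‖A x‖) {S : ℝ} (hS : 0 ≤ S)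
    (hSob : (∫ x, ‖ψ x‖ ^ 6 ∂μ) ^ ((1 : ℝ) / 6) ≤ S * (∫ x, ‖u x‖ ^ 2 ∂μ) ^ ((1 : ℝ) / 2)) :
    9 / 32 * ∫ x, ‖u x‖ ^ 2 ∂μ ≤ ∫ x, ‖v x‖ ^ 2 ∂μ
      + S ^ 2 * ((∫ x, ‖A x‖ ^ 6 ∂μ) ^ ((1 : ℝ) / 6)) ^ 4 * ∫ x, ‖ψ x‖ ^ 2 ∂μ := by
  have key := nine_div_thirty_two_mul_lpNorm_sq_le (φ := fun x => ‖ψ x‖) (a := fun x => ‖A x‖)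
    (memLp_ofNat_of_integrable_norm_pow 2 hu hu2) hv
    (memLp_ofNat_of_integrable_norm_pow 2 hψ.norm (by simpa using hψ2))
    (memLp_ofNat_of_integrable_norm_pow 6 hψ.norm (by simpa using hψ6))
    (memLp_ofNat_of_integrable_norm_pow 6 hA.norm (by simpa using hA6))
    (by simpa using huv) hS
    (by rwa [lpNorm_norm hψ, lpNorm_ofNat_eq_integral 6 hψ, lpNorm_ofNat_eq_integral 2 hu])
  rwa [lpNorm_norm hψ, lpNorm_norm hA, lpNorm_ofNat_pow_eq_integral 2 hu,
    lpNorm_ofNat_pow_eq_integral 2 hv, lpNorm_ofNat_pow_eq_integral 2 hψ,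
    lpNorm_ofNat_eq_integral 6 hA] at key

end MeasureTheory

section Gradient

variable {d : ℕ} {Ω : Set (EuclideanSpace ℝ (Fin d))} {ψ : EuclideanSpace ℝ (Fin d) → ℂ}
  {A : EuclideanSpace ℝ (Fin d) → Fin d → ℝ}

lemma aemeasurable_comp_fderivWithin {E F : Type*} [NormedAddCommGroup E] [NormedSpace ℝ E]
    [FiniteDimensional ℝ E] [MeasurableSpace E] [BorelSpace E] (μ : Measure E)
    [μ.IsAddHaarMeasure] [NormedAddCommGroup F] [NormedSpace ℝ F] {f : E → F} {s : Set E}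
    (hs : MeasurableSet s) (hf : DifferentiableOn ℝ f s) (L : F →L[ℝ] E) :
    AEMeasurable (fun x => L.comp (fderivWithin ℝ f s x)) (μ.restrict s) :=
  aemeasurable_fderivWithin μ hs fun x hx =>
    L.hasFDerivAt.comp_hasFDerivWithinAt x (hf x hx).hasFDerivWithinAt

/-- `aemeasurable_fderivWithin` only treats maps `E → E`, so the real and imaginary parts of
`∂ⱼψ` are read off the derivative of `x ↦ T (ψ x) • eⱼ` for `T = re, im`. -/
lemma aemeasurable_gradW (hΩ : MeasurableSet Ω) (hψ : DifferentiableOn ℝ ψ Ω) (j : Fin d) :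
    AEMeasurable (fun x => gradW Ω ψ x j) (volume.restrict Ω) := by
  have hT : ∀ T : ℂ →L[ℝ] ℝ, AEMeasurable (fun x => T (gradW Ω ψ x j)) (volume.restrict Ω) := by
    intro T
    let ev : (EuclideanSpace ℝ (Fin d) →L[ℝ] EuclideanSpace ℝ (Fin d)) →L[ℝ] ℝ :=
      (EuclideanSpace.proj j).comp (ContinuousLinearMap.apply ℝ _ (EuclideanSpace.single j 1))
    simpa [ev, gradW, Function.comp_def] using ev.continuous.measurable.comp_aemeasurable
      (aemeasurable_comp_fderivWithin volume hΩ hψ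
        ((ContinuousLinearMap.toSpanSingleton ℝ (EuclideanSpace.single j 1)).comp T))
  exact aemeasurable_of_re_im (by simpa using hT reCLM) (by simpa using hT imCLM)

def gradVec (Ω : Set (EuclideanSpace ℝ (Fin d))) (ψ : EuclideanSpace ℝ (Fin d) → ℂ)
    (x : EuclideanSpace ℝ (Fin d)) : EuclideanSpace ℂ (Fin d) :=
  WithLp.toLp 2 (gradW Ω ψ x)

def covGradVec (Ω : Set (EuclideanSpace ℝ (Fin d))) (ψ : EuclideanSpace ℝ (Fin d) → ℂ)
    (A : EuclideanSpace ℝ (Fin d) → Fin d → ℝ) (x : EuclideanSpace ℝ (Fin d)) :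
    EuclideanSpace ℂ (Fin d) :=
  WithLp.toLp 2 fun j => I * gradW Ω ψ x j + ψ x * A x j

lemma norm_sq_gradVec (x : EuclideanSpace ℝ (Fin d)) :
    ‖gradVec Ω ψ x‖ ^ 2 = ∑ j, normSq (gradW Ω ψ x j) := by
  simp [EuclideanSpace.norm_sq_eq, gradVec, normSq_eq_norm_sq]

lemma norm_sq_covGradVec (x : EuclideanSpace ℝ (Fin d)) :
    ‖covGradVec Ω ψ A x‖ ^ 2 = ∑ j, normSq (I * gradW Ω ψ x j + ψ x * A x j) := by
  simp [EuclideanSpace.norm_sq_eq, covGradVec, normSq_eq_norm_sq]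

lemma norm_toLp_eq_sqrt (y : Fin d → ℝ) :
    ‖(WithLp.toLp 2 y : EuclideanSpace ℝ (Fin d))‖ = √(∑ j, y j ^ 2) := by
  simp [EuclideanSpace.norm_eq]

lemma covGradVec_eq (x : EuclideanSpace ℝ (Fin d)) :
    covGradVec Ω ψ A x = I • gradVec Ω ψ x + ψ x • WithLp.toLp 2 fun j => (A x j : ℂ) := by
  ext j
  simp [covGradVec, gradVec]

lemma abs_norm_gradVec_sub_norm_covGradVec_le (x : EuclideanSpace ℝ (Fin d)) :
    |‖gradVec Ω ψ x‖ - ‖covGradVec Ω ψ A x‖|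
      ≤ ‖ψ x‖ * ‖(WithLp.toLp 2 (A x) : EuclideanSpace ℝ (Fin d))‖ := by
  simpa [covGradVec_eq, norm_smul, EuclideanSpace.norm_eq] using
    abs_norm_sub_norm_I_smul_add_le (gradVec Ω ψ x) (ψ x • WithLp.toLp 2 fun j => (A x j : ℂ))

lemma aestronglyMeasurable_gradVec (hΩ : MeasurableSet Ω) (hψ : DifferentiableOn ℝ ψ Ω) :
    AEStronglyMeasurable (gradVec Ω ψ) (volume.restrict Ω) :=
  ((PiLp.continuous_toLp 2 _).measurable.comp_aemeasurable
    (aemeasurable_pi_lambda _ (aemeasurable_gradW hΩ hψ))).aestronglyMeasurable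

lemma aestronglyMeasurable_covGradVec (hΩ : MeasurableSet Ω) (hψ : DifferentiableOn ℝ ψ Ω)
    (hA : Measurable A) : AEStronglyMeasurable (covGradVec Ω ψ A) (volume.restrict Ω) := by
  have hAℂ : Measurable fun x =>
      (WithLp.toLp 2 fun j => (A x j : ℂ) : EuclideanSpace ℂ (Fin d)) := by
    fun_prop
  simp_rw [funext fun x => covGradVec_eq (Ω := Ω) (ψ := ψ) (A := A) x]
  exact ((aestronglyMeasurable_gradVec hΩ hψ).const_smul I).add
    ((hψ.continuousOn.aestronglyMeasurable hΩ).smul hAℂ.aestronglyMeasurable)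

end Gradient

/-- The coercivity lower bound (4.56)–(4.57):
`‖i∇ψ + ψA‖²_{L²} + S²‖A‖⁴_{L⁶}‖ψ‖²_{L²} ≥ (9/32)‖∇ψ‖²_{L²}`,
where `S` is a Sobolev constant with `‖ψ‖_{L⁶} ≤ S‖∇ψ‖_{L²}`. -/
theorem stmt14 (d : ℕ) (Ω : Set (EuclideanSpace ℝ (Fin d))) (hΩ : MeasurableSet Ω)
    (ψ : EuclideanSpace ℝ (Fin d) → ℂ) (A : EuclideanSpace ℝ (Fin d) → Fin d → ℝ)
    (hψd : DifferentiableOn ℝ ψ Ω) (hA : Measurable A)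
    (hGψ : Integrable (fun x => ∑ j, Complex.normSq (gradW Ω ψ x j)) (volume.restrict Ω))
    (hψ2 : Integrable (fun x => Complex.normSq (ψ x)) (volume.restrict Ω))
    (hψ6 : Integrable (fun x => ‖ψ x‖ ^ (6 : ℕ)) (volume.restrict Ω))
    (hA6 : Integrable (fun x => Real.sqrt (∑ j, (A x j) ^ 2) ^ (6 : ℕ)) (volume.restrict Ω))
    (S : ℝ) (hS : 0 ≤ S)
    (hSob : (∫ x in Ω, ‖ψ x‖ ^ (6 : ℕ)) ^ ((1 : ℝ) / 6)
      ≤ S * (∫ x in Ω, ∑ j, Complex.normSq (gradW Ω ψ x j)) ^ ((1 : ℝ) / 2)) :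
    (∫ x in Ω, ∑ j, Complex.normSq (Complex.I * gradW Ω ψ x j + ψ x * (A x j : ℂ)))
        + S ^ (2 : ℕ)
          * ((∫ x in Ω, Real.sqrt (∑ j, (A x j) ^ 2) ^ (6 : ℕ)) ^ ((1 : ℝ) / 6)) ^ (4 : ℕ)
          * (∫ x in Ω, Complex.normSq (ψ x))
      ≥ (9 / 32) * ∫ x in Ω, ∑ j, Complex.normSq (gradW Ω ψ x j) := by
  have key := nine_div_thirty_two_mul_integral_norm_sq_le
    (A := fun x => (WithLp.toLp 2 (A x) : EuclideanSpace ℝ (Fin d)))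
    (aestronglyMeasurable_gradVec hΩ hψd) (aestronglyMeasurable_covGradVec hΩ hψd hA)
    (hψd.continuousOn.aestronglyMeasurable hΩ) (by fun_prop)
    (by simpa [norm_sq_gradVec] using hGψ) (by simpa [normSq_eq_norm_sq] using hψ2) hψ6
    (by simpa [norm_toLp_eq_sqrt] using hA6) abs_norm_gradVec_sub_norm_covGradVec_le hS
    (by simpa [norm_sq_gradVec] using hSob)
  simpa [norm_sq_gradVec, norm_sq_covGradVec, norm_toLp_eq_sqrt, normSq_eq_norm_sq, add_comm]
    using key

end
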